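/- arXiv:1608.02505 — 8 statements merged into one kernel-verified Lean document; each statement's English description precedes it below -/
import Mathlib

section
/- Suppose c_L, c_D : R → R are continuous, c_L(0) = c_L(π) = 0, c_D(π) > c_D(0), and for a fixed δ with sin δ ≠ 0, fix constants a, b ∈ R. Define f(α) := a·sin δ·cos α + b·sin α·cos δ − c_L(α)·cos(α+δ) − c_D(α)·sin(α+δ) (up to a factor of |ẋ_rw|², the equilibrium function). If there exists α_s ∈ (0, π/2) with c_L(α_s) > 0 and tan(α_s) ≤ (c_D(α_s) − c_D(π))/c_L(α_s), then either f(0)·f(π) ≤ 0, or the function Δ_a(ᾱ) := [a − c_D(ᾱ)]cos ᾱ + c_L(ᾱ) sin ᾱ, with c_D(0) < a < c_D(π), satisfies Δ_a(0) > 0 and Δ_a(α_s) ≤ 0; in either case f has a zero. -/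
open Real

lemma exists_zero_of_mul_nonpos (g : ℝ → ℝ) (hg : Continuous g) {x y : ℝ}
    (hxy : x ≤ y) (h : g x * g y ≤ 0) : ∃ z, g z = 0 := by
  rcases mul_nonpos_iff.mp h with ⟨h1, h2⟩ | ⟨h1, h2⟩
  · have : (0:ℝ) ∈ Set.Icc (g y) (g x) := ⟨h2, h1⟩
    obtain ⟨z, _, hz⟩ := intermediate_value_Icc' hxy hg.continuousOn this
    exact ⟨z, hz⟩
  · have : (0:ℝ) ∈ Set.Icc (g x) (g y) := ⟨h1, h2⟩
    obtain ⟨z, _, hz⟩ := intermediate_value_Icc hxy hg.continuousOn this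
    exact ⟨z, hz⟩

/-- Existence of an equilibrium orientation for a symmetric airfoil with thrust
not aligned with the zero-lift direction (Theorem 2 of the paper). -/
theorem equilibrium_exists_symmetric_shape
    (cL cD : ℝ → ℝ) (hcL : Continuous cL) (hcD : Continuous cD)
    (hcL0 : cL 0 = 0) (hcLπ : cL π = 0)
    (hD_even : ∀ α, cD (-α) = cD α) (hL_odd : ∀ α, cL (-α) = - cL α)
    (hDππ : cD π > cD 0)
    (δ : ℝ) (hδ : sin δ ≠ 0) (a b : ℝ)
    (f : ℝ → ℝ)
    (hf : ∀ α, f α = a * sin δ * cos α + b * sin α * cos δ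
        - cL α * cos (α + δ) - cD α * sin (α + δ))
    (αs : ℝ) (hαs : αs ∈ Set.Ioo 0 (π / 2)) (hcLαs : 0 < cL αs)
    (htan : tan αs ≤ (cD αs - cD π) / cL αs) :
    (f 0 * f π ≤ 0 ∨
      ((cD 0 < a ∧ a < cD π) ∧
        (a - cD 0) * cos 0 + cL 0 * sin 0 > 0 ∧
        (a - cD αs) * cos αs + cL αs * sin αs ≤ 0)) ∧
    ∃ α, f α = 0 := by
  have hcont : Continuous f := by
    have : f = fun α => a * sin δ * cos α + b * sin α * cos δ
        - cL α * cos (α + δ) - cD α * sin (α + δ) := funext hf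
    rw [this]; continuity
  have hf0 : f 0 = (a - cD 0) * sin δ := by
    rw [hf 0]; simp [hcL0]; ring
  have hfπ : f π = (cD π - a) * sin δ := by
    rw [hf π]; simp [hcLπ, sin_add, cos_add]; ring
  set Δ : ℝ → ℝ := fun α => (a - cD α) * cos α + cL α * sin α with hΔ
  have key : ∀ α, f α + f (-α) = 2 * sin δ * Δ α := by
    intro α
    rw [hf α, hf (-α)]
    simp only [hΔ, cos_neg, sin_neg, cos_add, sin_add, hD_even, hL_odd]
    ring
  by_cases hcase : cD 0 < a ∧ a < cD π
  · -- second branch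
    obtain ⟨ha0, haπ⟩ := hcase
    have hcos : 0 < cos αs := by
      apply cos_pos_of_mem_Ioo
      constructor
      · linarith [hαs.1, pi_pos]
      · exact hαs.2
    have hΔ0 : Δ 0 > 0 := by simp [hΔ]; linarith
    have hΔαs : Δ αs ≤ 0 := by
      have h1 : sin αs / cos αs ≤ (cD αs - cD π) / cL αs := by
        rwa [tan_eq_sin_div_cos] at htan
      have h2 : sin αs * cL αs ≤ (cD αs - cD π) * cos αs :=
        (div_le_div_iff₀ hcos hcLαs).mp h1
      have : Δ αs = (a - cD αs) * cos αs + cL αs * sin αs := rfl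
      nlinarith
    have hΔcont : Continuous Δ := by
      simp only [hΔ]; continuity
    have h0αs : (0:ℝ) ≤ αs := le_of_lt hαs.1
    obtain ⟨ᾱ, hᾱmem, hᾱ⟩ := intermediate_value_Icc' h0αs hΔcont.continuousOn
      (⟨hΔαs, le_of_lt hΔ0⟩ : (0:ℝ) ∈ Set.Icc (Δ αs) (Δ 0))
    have hsum : f ᾱ + f (-ᾱ) = 0 := by rw [key ᾱ, hᾱ]; ring
    have hneg : f (-ᾱ) = - f ᾱ := by linarith
    have hmul : f (-ᾱ) * f ᾱ ≤ 0 := by rw [hneg]; nlinarith [sq_nonneg (f ᾱ)]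
    have hzero : ∃ z, f z = 0 :=
      exists_zero_of_mul_nonpos f hcont (by linarith [hᾱmem.1] : -ᾱ ≤ ᾱ) hmul
    exact ⟨Or.inr ⟨⟨ha0, haπ⟩, by simp [hcL0]; linarith, hΔαs⟩, hzero⟩
  · -- first branch
    have hprod : f 0 * f π ≤ 0 := by
      rw [hf0, hfπ]
      have h1 : (a - cD 0) * (cD π - a) ≤ 0 := by
        rcases not_and_or.mp hcase with h | h
        · push_neg at h; nlinarith
        · push_neg at h; nlinarith
      nlinarith [sq_nonneg (sin δ), sq_nonneg (a - cD 0), sq_nonneg (cD π - a)]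
    exact ⟨Or.inl hprod,
      exists_zero_of_mul_nonpos f hcont (le_of_lt pi_pos) hprod⟩
end

section
/- Let c_D(0) < a < c_D(π) and suppose c_L(α_s) > 0, α_s ∈ (0, π/2), and c_L(α_s) sin(α_s) − [c_D(α_s) − c_D(π)] cos(α_s) ≤ 0. Then the continuous function Δ_a(ᾱ) = [a − c_D(ᾱ)] cos ᾱ + c_L(ᾱ) sin ᾱ satisfies Δ_a(0) > 0 and Δ_a(α_s) ≤ 0, hence Δ_a has a zero in [0, α_s]. -/
open Real

/-- Key step of the equilibrium-existence proof: the function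
`Δ_a(ᾱ) = (a − c_D(ᾱ)) cos ᾱ + c_L(ᾱ) sin ᾱ` is positive at `0`,
non-positive at `α_s`, hence has a zero in `[0, α_s]`. -/
theorem Delta_has_zero
    (cL cD : ℝ → ℝ) (hcL : Continuous cL) (hcD : Continuous cD)
    (a : ℝ) (ha₁ : cD 0 < a) (ha₂ : a < cD π)
    (αs : ℝ) (hαs : αs ∈ Set.Ioo 0 (π / 2)) (hcLαs : 0 < cL αs)
    (hineq : cL αs * sin αs - (cD αs - cD π) * cos αs ≤ 0) :
    (0 < (a - cD 0) * cos 0 + cL 0 * sin 0) ∧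
    ((a - cD αs) * cos αs + cL αs * sin αs ≤ 0) ∧
    ∃ ᾱ ∈ Set.Icc 0 αs, (a - cD ᾱ) * cos ᾱ + cL ᾱ * sin ᾱ = 0 := by
  obtain ⟨h0, hπ2⟩ := hαs
  have hcos : 0 < Real.cos αs := Real.cos_pos_of_mem_Ioo ⟨by linarith [Real.pi_pos], hπ2⟩
  have h1 : 0 < (a - cD 0) * Real.cos 0 + cL 0 * Real.sin 0 := by
    simp [Real.cos_zero, Real.sin_zero]; linarith
  have h2 : (a - cD αs) * Real.cos αs + cL αs * Real.sin αs ≤ 0 := by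
    nlinarith [mul_pos hcLαs hcos]
  refine ⟨h1, h2, ?_⟩
  have hcont : ContinuousOn (fun x => (a - cD x) * Real.cos x + cL x * Real.sin x)
      (Set.Icc 0 αs) :=
    (((continuous_const.sub hcD).mul Real.continuous_cos).add
      (hcL.mul Real.continuous_sin)).continuousOn
  have := intermediate_value_Icc' (le_of_lt h0) hcont
  obtain ⟨x, hx, hfx⟩ := this ⟨h2, le_of_lt h1⟩
  exact ⟨x, hx, hfx⟩
end

section
/- Define c̄_L(α,λ) := c_L(α) − λ sin(α+δ) and c̄_D(α,λ) := c_D(α) + λ cos(α+δ) for a function λ(α). Both c̄_L and c̄_D have zero derivative with respect to α (i.e., are constant) if and only if λ(α) = c_L'(α) cos(α+δ) + c_D'(α) sin(α+δ), λ'(α) = c_L'(α) sin(α+δ) − c_D'(α) cos(α+δ), which in turn is equivalent (assuming c_L, c_D twice differentiable) to the condition (c_D'' − 2c_L') sin(α+δ) + (c_L'' + 2c_D') cos(α+δ) = 0 for all α. -/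
open Real

/-! With `s = sin (α + δ)` and `c = cos (α + δ)`, the derivatives of `c̄_L` and `c̄_D` are
`c_L' - (λ' s + λ c)` and `c_D' + (λ' c - λ s)`. Their vanishing is a linear system in
`(λ, λ')` whose matrix is a rotation, so it is solved by rotating back; this gives the formulas for `λ`
and `λ'`. Differentiating the formula for `λ` and comparing with the one for `λ'` gives the
second-order condition. -/

theorem rotation_system_iff {R : Type*} [CommRing R] {a b x y s c : R} (h : s ^ 2 + c ^ 2 = 1) :
    (a - (y * s + x * c) = 0 ∧ b + (y * c + x * -s) = 0) ↔
      (x = a * c + b * s ∧ y = a * s - b * c) := by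
  constructor
  · rintro ⟨h₁, h₂⟩
    exact ⟨by linear_combination -c * h₁ - s * h₂ - x * h,
      by linear_combination -s * h₁ + c * h₂ - y * h⟩
  · rintro ⟨hx, hy⟩
    exact ⟨by linear_combination -s * hy - c * hx - a * h,
      by linear_combination c * hy - s * hx - b * h⟩

section ShiftedTrig

variable {u v : ℝ → ℝ} {u' x δ : ℝ}

theorem hasDerivAt_mul_sin_add (hu : HasDerivAt u u' x) :
    HasDerivAt (fun β => u β * sin (β + δ)) (u' * sin (x + δ) + u x * cos (x + δ)) x :=
  hu.mul (by simpa using ((hasDerivAt_id x).add_const δ).sin)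

theorem hasDerivAt_mul_cos_add (hu : HasDerivAt u u' x) :
    HasDerivAt (fun β => u β * cos (β + δ)) (u' * cos (x + δ) + u x * -sin (x + δ)) x :=
  hu.mul (by simpa using ((hasDerivAt_id x).add_const δ).cos)

theorem deriv_mul_cos_add_mul_sin (hu : DifferentiableAt ℝ u x) (hv : DifferentiableAt ℝ v x) :
    deriv (fun β => u β * cos (β + δ) + v β * sin (β + δ)) x =
      (deriv v x - u x) * sin (x + δ) + (deriv u x + v x) * cos (x + δ) := by
  rw [((hasDerivAt_mul_cos_add hu.hasDerivAt).fun_add (hasDerivAt_mul_sin_add hv.hasDerivAt)).deriv]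
  ring

end ShiftedTrig

theorem deriv_eq_iff_of_eq_mul_cos_add_mul_sin {lam u v : ℝ → ℝ} {δ : ℝ}
    (hu : Differentiable ℝ u) (hv : Differentiable ℝ v)
    (hlam : ∀ α, lam α = u α * cos (α + δ) + v α * sin (α + δ)) (α : ℝ) :
    deriv lam α = u α * sin (α + δ) - v α * cos (α + δ) ↔
      (deriv v α - 2 * u α) * sin (α + δ) + (deriv u α + 2 * v α) * cos (α + δ) = 0 := by
  rw [funext hlam, deriv_mul_cos_add_mul_sin (hu α) (hv α)]
  constructor <;> intro h <;> linear_combination h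

/-- Lemma 2 i): the transformed coefficients `c̄_L, c̄_D` are constant iff `λ`
and `λ'` are given by the stated formulas, which (for twice differentiable
`c_L, c_D`) is equivalent to `(c_D'' − 2c_L') sin(α+δ) + (c_L'' + 2c_D') cos(α+δ) = 0`. -/
theorem spherical_equivalency_condition
    (cL cD lam : ℝ → ℝ) (δ : ℝ)
    (hcL : ContDiff ℝ 2 cL) (hcD : ContDiff ℝ 2 cD)
    (hlam : Differentiable ℝ lam) :
    ((∀ α, deriv (fun β => cL β - lam β * sin (β + δ)) α = 0 ∧
           deriv (fun β => cD β + lam β * cos (β + δ)) α = 0) ↔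
      (∀ α, lam α = deriv cL α * cos (α + δ) + deriv cD α * sin (α + δ) ∧
            deriv lam α = deriv cL α * sin (α + δ) - deriv cD α * cos (α + δ))) ∧
    ((∀ α, lam α = deriv cL α * cos (α + δ) + deriv cD α * sin (α + δ) ∧
           deriv lam α = deriv cL α * sin (α + δ) - deriv cD α * cos (α + δ)) ↔
      ((∀ α, lam α = deriv cL α * cos (α + δ) + deriv cD α * sin (α + δ)) ∧
       (∀ α, (deriv (deriv cD) α - 2 * deriv cL α) * sin (α + δ)
           + (deriv (deriv cL) α + 2 * deriv cD α) * cos (α + δ) = 0))) := by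
  have hdL (α : ℝ) : deriv (fun β => cL β - lam β * sin (β + δ)) α =
      deriv cL α - (deriv lam α * sin (α + δ) + lam α * cos (α + δ)) :=
    ((hcL.differentiable two_ne_zero α).hasDerivAt.sub
      (hasDerivAt_mul_sin_add (hlam α).hasDerivAt)).deriv
  have hdD (α : ℝ) : deriv (fun β => cD β + lam β * cos (β + δ)) α =
      deriv cD α + (deriv lam α * cos (α + δ) + lam α * -sin (α + δ)) :=
    ((hcD.differentiable two_ne_zero α).hasDerivAt.add
      (hasDerivAt_mul_cos_add (hlam α).hasDerivAt)).deriv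
  refine ⟨forall_congr' fun α => ?_, ?_⟩
  · rw [hdL, hdD]
    exact rotation_system_iff (sin_sq_add_cos_sq _)
  · rw [forall_and]
    exact and_congr_right fun hlamF => forall_congr' <|
      deriv_eq_iff_of_eq_mul_cos_add_mul_sin hcL.differentiable_deriv_two
        hcD.differentiable_deriv_two hlamF
end

section
/- For c_L(α) = c₁ sin(2α) and c_D(α) = c₀ + 2c₁ sin²(α), the condition (c_D'' − 2c_L') sin(α+δ) + (c_L'' + 2c_D') cos(α+δ) = 0 holds identically for all α and all δ; moreover with λ(α) = c_L'(α) cos(α+δ) + c_D'(α) sin(α+δ) = 2c₁ cos(α−δ), one obtains c̄_L(α) := c_L(α) − λ(α) sin(α+δ) = −c₁ sin(2δ) and c̄_D(α) := c_D(α) + λ(α) cos(α+δ) = c₀ + 2c₁ cos²(δ), both constant in α. -/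
/-!
Since `c_L' = 2c₁ cos 2α` and `c_D' = 2c₁ sin 2α`, the model satisfies `c_D'' = 2 c_L'` and
`c_L'' = -2 c_D'`, so both brackets of the equivalency condition vanish for every `δ`.
The remaining identities are product-to-sum formulas: `λ(α) = 2c₁ cos(2α - (α + δ))`,
`2 cos(α - δ) sin(α + δ) = sin 2α + sin 2δ` and `2 cos(α - δ) cos(α + δ) = cos 2α + cos 2δ`.
-/

open Real

theorem deriv_const_mul_sin_two_mul (a : ℝ) :
    deriv (fun α : ℝ => a * sin (2 * α)) = fun α => 2 * a * cos (2 * α) := by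
  funext α
  rw [((hasDerivAt_const_mul 2).sin.const_mul a).deriv]
  ring

theorem deriv_const_mul_cos_two_mul (a : ℝ) :
    deriv (fun α : ℝ => a * cos (2 * α)) = fun α => -(2 * a) * sin (2 * α) := by
  funext α
  rw [((hasDerivAt_const_mul 2).cos.const_mul a).deriv]
  ring

theorem deriv_const_add_mul_sin_sq (b a : ℝ) :
    deriv (fun α : ℝ => b + a * sin α ^ 2) = fun α => a * sin (2 * α) := by
  funext α
  rw [(((hasDerivAt_sin α).fun_pow 2).const_mul a |>.const_add b).deriv, sin_two_mul]
  norm_num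

theorem two_mul_cos_sub_mul_sin_add (x y : ℝ) :
    2 * cos (x - y) * sin (x + y) = sin (2 * x) + sin (2 * y) := by
  rw [mul_right_comm, two_mul_sin_mul_cos]
  ring_nf

theorem two_mul_cos_sub_mul_cos_add (x y : ℝ) :
    2 * cos (x - y) * cos (x + y) = cos (2 * x) + cos (2 * y) := by
  rw [two_mul_cos_mul_cos, ← cos_neg (x - y - (x + y))]
  ring_nf

/-- Proposition 1 i): the flat-plate-like model `c_L = c₁ sin 2α`,
`c_D = c₀ + 2c₁ sin²α` satisfies the spherical-equivalency condition for all
`δ`, with `λ(α) = 2c₁ cos(α−δ)` and constant transformed coefficients. -/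
theorem flat_plate_spherical_equivalency (c₀ c₁ : ℝ) :
    let cL : ℝ → ℝ := fun α => c₁ * sin (2 * α)
    let cD : ℝ → ℝ := fun α => c₀ + 2 * c₁ * (sin α) ^ 2
    ∀ (δ α : ℝ),
      (deriv (deriv cD) α - 2 * deriv cL α) * sin (α + δ)
        + (deriv (deriv cL) α + 2 * deriv cD α) * cos (α + δ) = 0 ∧
      deriv cL α * cos (α + δ) + deriv cD α * sin (α + δ) = 2 * c₁ * cos (α - δ) ∧
      cL α - (2 * c₁ * cos (α - δ)) * sin (α + δ) = - c₁ * sin (2 * δ) ∧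
      cD α + (2 * c₁ * cos (α - δ)) * cos (α + δ) = c₀ + 2 * c₁ * (cos δ) ^ 2 := by
  intro cL cD δ α
  have hL : deriv cL = fun α => 2 * c₁ * cos (2 * α) := deriv_const_mul_sin_two_mul c₁
  have hD : deriv cD = fun α => 2 * c₁ * sin (2 * α) := deriv_const_add_mul_sin_sq c₀ (2 * c₁)
  have hLL : deriv (deriv cL) α = -2 * deriv cD α := by
    rw [hL, hD, deriv_const_mul_cos_two_mul]
    ring
  have hDD : deriv (deriv cD) α = 2 * deriv cL α := by
    rw [hD, hL, deriv_const_mul_sin_two_mul]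
    ring
  refine ⟨by rw [hLL, hDD]; ring, ?_, ?_, ?_⟩
  · rw [hL, hD, show α - δ = 2 * α - (α + δ) by ring, cos_sub]
    ring
  · linear_combination (-c₁) * two_mul_cos_sub_mul_sin_add α δ
  · linear_combination c₁ * two_mul_cos_sub_mul_cos_add α δ + c₁ * cos_two_mul_eq_one_sub α
      + c₁ * cos_two_mul δ
end

section
/- Suppose that for all α and all δ the condition (c_D''(α) − 2c_L'(α)) sin(α+δ) + (c_L''(α) + 2c_D'(α)) cos(α+δ) = 0 holds, where c_L, c_D are twice differentiable and independent of δ. Then c_D''(α) = 2c_L'(α) and c_L''(α) = −2c_D'(α) for all α, and the general solution is c_D(α) = b₀ + b₁ sin(2α) − b₂ cos(2α), c_L(α) = b₃ + b₁ cos(2α) + b₂ sin(2α) for constants b₀, b₁, b₂, b₃. If moreover c_D is even, c_L is odd, and c_L(0) = 0, then b₁ = b₃ = 0 and hence c_L(α) = b₂ sin(2α), c_D(α) = (b₀ − b₂) + 2b₂ sin²(α). -/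
open Real Set

/-!
Evaluating the condition at `α + δ = π/2` and at `α + δ = 0` kills each coefficient separately,
so `(c_D', c_L')` solves the rotation system `p' = 2q`, `q' = -2p`. Its solutions are determined
by their initial values, because `p² + q²` is conserved, hence are rotations of `(p 0, q 0)`
at angular speed `2`; integrating once more gives the general solution. Oddness of `c_L` then
removes the constant and the `cos 2α` term of `c_L`.
-/

lemma eq_zero_of_forall_mul_sin_add_mul_cos_eq_zero {a b : ℝ}
    (h : ∀ t, a * sin t + b * cos t = 0) : a = 0 ∧ b = 0 := by
  have ha := h (π / 2)
  have hb := h 0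
  simp only [sin_pi_div_two, cos_pi_div_two, sin_zero, cos_zero] at ha hb
  constructor <;> linarith

lemma hasDerivAt_mul_sin_add_mul_cos (a b ω x : ℝ) :
    HasDerivAt (fun x => a * sin (ω * x) + b * cos (ω * x))
      (ω * (a * cos (ω * x) - b * sin (ω * x))) x := by
  have hωx : HasDerivAt (fun x => ω * x) ω x := by
    simpa using (hasDerivAt_id x).const_mul ω
  exact ((hωx.sin.const_mul a).add (hωx.cos.const_mul b)).congr_deriv (by ring)

lemma exists_eq_add_of_hasDerivAt {f g f' : ℝ → ℝ} (hf : ∀ x, HasDerivAt f (f' x) x)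
    (hg : ∀ x, HasDerivAt g (f' x) x) : ∃ c, ∀ x, f x = g x + c := by
  obtain ⟨c, hc⟩ := isOpen_univ.exists_eq_add_of_deriv_eq isPreconnected_univ
    (fun x _ => (hf x).differentiableAt.differentiableWithinAt)
    (fun x _ => (hg x).differentiableAt.differentiableWithinAt)
    (fun x _ => (hf x).deriv.trans (hg x).deriv.symm)
  exact ⟨c, fun x => hc (mem_univ x)⟩

section Rotation

variable {u v : ℝ → ℝ} {ω : ℝ}

lemma eq_zero_of_hasDerivAt_rotation (hu : ∀ x, HasDerivAt u (ω * v x) x)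
    (hv : ∀ x, HasDerivAt v (-ω * u x) x) (hu0 : u 0 = 0) (hv0 : v 0 = 0) (x : ℝ) :
    u x = 0 ∧ v x = 0 := by
  have henergy : ∀ y, HasDerivAt (fun y => u y ^ 2 + v y ^ 2) 0 y := fun y =>
    (((hu y).pow 2).add ((hv y).pow 2)).congr_deriv (by push_cast; ring)
  have hconst := is_const_of_deriv_eq_zero (fun y => (henergy y).differentiableAt)
    (fun y => (henergy y).deriv) x 0
  simp only [hu0, hv0] at hconst
  constructor <;> nlinarith [sq_nonneg (u x), sq_nonneg (v x)]

lemma eq_mul_sin_add_mul_cos_of_hasDerivAt_rotation (hu : ∀ x, HasDerivAt u (ω * v x) x)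
    (hv : ∀ x, HasDerivAt v (-ω * u x) x) (x : ℝ) :
    u x = v 0 * sin (ω * x) + u 0 * cos (ω * x) ∧
      v x = -u 0 * sin (ω * x) + v 0 * cos (ω * x) := by
  have hzero := eq_zero_of_hasDerivAt_rotation
    (u := fun x => u x - (v 0 * sin (ω * x) + u 0 * cos (ω * x)))
    (v := fun x => v x - (-u 0 * sin (ω * x) + v 0 * cos (ω * x)))
    (fun y => ((hu y).sub (hasDerivAt_mul_sin_add_mul_cos _ _ ω y)).congr_deriv (by ring))
    (fun y => ((hv y).sub (hasDerivAt_mul_sin_add_mul_cos _ _ ω y)).congr_deriv (by ring))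
    (by simp) (by simp) x
  constructor <;> linarith [hzero.1, hzero.2]

end Rotation

lemma exists_eq_sin_cos_of_deriv_deriv {cD cL : ℝ → ℝ} {ω : ℝ} (hω : ω ≠ 0)
    (hD : Differentiable ℝ cD) (hD' : Differentiable ℝ (deriv cD))
    (hL : Differentiable ℝ cL) (hL' : Differentiable ℝ (deriv cL))
    (hDD : ∀ x, deriv (deriv cD) x = ω * deriv cL x)
    (hLL : ∀ x, deriv (deriv cL) x = -ω * deriv cD x) :
    ∃ b₀ b₁ b₂ b₃ : ℝ, ∀ x,
      cD x = b₀ + b₁ * sin (ω * x) - b₂ * cos (ω * x) ∧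
        cL x = b₃ + b₁ * cos (ω * x) + b₂ * sin (ω * x) := by
  have hrot := eq_mul_sin_add_mul_cos_of_hasDerivAt_rotation
    (fun x => hDD x ▸ (hD' x).hasDerivAt) (fun x => hLL x ▸ (hL' x).hasDerivAt)
  set b₁ := deriv cD 0 / ω
  set b₂ := deriv cL 0 / ω
  have hb₁ : ω * b₁ = deriv cD 0 := mul_div_cancel₀ _ hω
  have hb₂ : ω * b₂ = deriv cL 0 := mul_div_cancel₀ _ hω
  obtain ⟨b₀, hb₀⟩ := exists_eq_add_of_hasDerivAt (fun x => (hD x).hasDerivAt)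
    (fun x => (hasDerivAt_mul_sin_add_mul_cos b₁ (-b₂) ω x).congr_deriv <| by
      rw [(hrot x).1, ← hb₁, ← hb₂]; ring)
  obtain ⟨b₃, hb₃⟩ := exists_eq_add_of_hasDerivAt (fun x => (hL x).hasDerivAt)
    (fun x => (hasDerivAt_mul_sin_add_mul_cos b₂ b₁ ω x).congr_deriv <| by
      rw [(hrot x).2, ← hb₁, ← hb₂]; ring)
  exact ⟨b₀, b₁, b₂, b₃, fun x => ⟨by rw [hb₀ x]; ring, by rw [hb₃ x]; ring⟩⟩

lemma const_and_cos_coeff_eq_zero_of_odd {f : ℝ → ℝ} {ω b₁ b₂ b₃ : ℝ} (hω : ω ≠ 0)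
    (hf : ∀ x, f x = b₃ + b₁ * cos (ω * x) + b₂ * sin (ω * x))
    (hodd : ∀ x, f (-x) = -f x) : b₁ = 0 ∧ b₃ = 0 := by
  have hquarter : ω * (π / (2 * ω)) = π / 2 := by field_simp
  have h₀ := hodd 0
  have h₁ := hodd (π / (2 * ω))
  simp only [hf, neg_zero, mul_neg, mul_zero, cos_neg, sin_neg, cos_zero, sin_zero,
    hquarter, cos_pi_div_two, sin_pi_div_two] at h₀ h₁
  constructor <;> linarith

theorem flat_plate_unique_general
    (cL cD : ℝ → ℝ) (hcL : ContDiff ℝ 2 cL) (hcD : ContDiff ℝ 2 cD)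
    (hcond : ∀ (α δ : ℝ),
      (deriv (deriv cD) α - 2 * deriv cL α) * sin (α + δ)
        + (deriv (deriv cL) α + 2 * deriv cD α) * cos (α + δ) = 0)
    (hL_odd : ∀ α, cL (-α) = - cL α) :
    (∀ α, deriv (deriv cD) α = 2 * deriv cL α ∧
          deriv (deriv cL) α = -2 * deriv cD α) ∧
    ∃ b₀ b₁ b₂ b₃ : ℝ,
      (∀ α, cD α = b₀ + b₁ * sin (2 * α) - b₂ * cos (2 * α) ∧
            cL α = b₃ + b₁ * cos (2 * α) + b₂ * sin (2 * α)) ∧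
      b₁ = 0 ∧ b₃ = 0 ∧
      (∀ α, cL α = b₂ * sin (2 * α) ∧
            cD α = (b₀ - b₂) + 2 * b₂ * (sin α) ^ 2) := by
  have hmotion : ∀ α, deriv (deriv cD) α = 2 * deriv cL α ∧
      deriv (deriv cL) α = -2 * deriv cD α := fun α => by
    have h := eq_zero_of_forall_mul_sin_add_mul_cos_eq_zero fun t => by
      simpa using hcond α (t - α)
    constructor <;> linarith [h.1, h.2]
  obtain ⟨b₀, b₁, b₂, b₃, hsol⟩ := exists_eq_sin_cos_of_deriv_deriv two_ne_zero
    (hcD.differentiable two_ne_zero) hcD.differentiable_deriv_two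
    (hcL.differentiable two_ne_zero) hcL.differentiable_deriv_two
    (fun α => (hmotion α).1) (fun α => (hmotion α).2)
  obtain ⟨rfl, rfl⟩ := const_and_cos_coeff_eq_zero_of_odd two_ne_zero (fun α => (hsol α).2) hL_odd
  refine ⟨hmotion, b₀, 0, b₂, 0, hsol, rfl, rfl, fun α => ⟨?_, ?_⟩⟩
  · simpa using (hsol α).2
  · rw [(hsol α).1, cos_two_mul_eq_one_sub]
    ring

/-- Lemma 4: if the spherical-equivalency condition holds for every `δ`, then
`c_D'' = 2c_L'`, `c_L'' = −2c_D'`, the general solution is the stated family,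
and for symmetric shapes (`c_D` even, `c_L` odd, `c_L 0 = 0`) one gets
`c_L = b₂ sin 2α`, `c_D = (b₀ − b₂) + 2b₂ sin²α`. -/
theorem flat_plate_unique
    (cL cD : ℝ → ℝ) (hcL : ContDiff ℝ 2 cL) (hcD : ContDiff ℝ 2 cD)
    (hcond : ∀ (α δ : ℝ),
      (deriv (deriv cD) α - 2 * deriv cL α) * sin (α + δ)
        + (deriv (deriv cL) α + 2 * deriv cD α) * cos (α + δ) = 0)
    (hD_even : ∀ α, cD (-α) = cD α) (hL_odd : ∀ α, cL (-α) = - cL α)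
    (hcL0 : cL 0 = 0) :
    (∀ α, deriv (deriv cD) α = 2 * deriv cL α ∧
          deriv (deriv cL) α = -2 * deriv cD α) ∧
    ∃ b₀ b₁ b₂ b₃ : ℝ,
      (∀ α, cD α = b₀ + b₁ * sin (2 * α) - b₂ * cos (2 * α) ∧
            cL α = b₃ + b₁ * cos (2 * α) + b₂ * sin (2 * α)) ∧
      b₁ = 0 ∧ b₃ = 0 ∧
      (∀ α, cL α = b₂ * sin (2 * α) ∧
            cD α = (b₀ - b₂) + 2 * b₂ * (sin α) ^ 2) :=
  flat_plate_unique_general cL cD hcL hcD hcond hL_odd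
end

section
/- Define the passivity-violating example: let c_L(α) = sin α and c_D(α) = c₀ + 1 − cos α with c₀ > 0. Then (a) c_D(α) > 0 for all α, (b) the aerodynamic force F_a = k_a|v_a|(c_L(α) S v_a − c_D(α) v_a) satisfies the passivity inequality v_aᵀ F_a ≤ 0 for all v_a ∈ R² and α ∈ R (with k_a > 0), and (c) c_L(0) = c_L(π) = 0. -/
open Real Matrix

/-! Since `S` is skew-symmetric, the lift term does no work: `vᵀ S v = 0`, so
`vᵀ F_a = -k_a |v| c_D(α) |v|²`, which is nonpositive because `c_D ≥ c₀ > 0`. -/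

/-- Rotation by π/2. -/
noncomputable def Srot : Matrix (Fin 2) (Fin 2) ℝ := !![0, -1; 1, 0]

section SkewQuadraticForm

variable {n R : Type*} [Fintype n] [CommRing R]

theorem dotProduct_mulVec_self_eq_zero_of_transpose_eq_neg [NoZeroDivisors R] [CharZero R]
    {A : Matrix n n R} (hA : Aᵀ = -A) (v : n → R) : v ⬝ᵥ A *ᵥ v = 0 := by
  have h : v ⬝ᵥ A *ᵥ v = -(v ⬝ᵥ A *ᵥ v) :=
    calc v ⬝ᵥ A *ᵥ v = v ᵥ* Aᵀ ⬝ᵥ v := by rw [vecMul_transpose, dotProduct_comm]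
      _ = v ⬝ᵥ Aᵀ *ᵥ v := (dotProduct_mulVec v Aᵀ v).symm
      _ = -(v ⬝ᵥ A *ᵥ v) := by rw [hA, neg_mulVec, dotProduct_neg]
  exact self_eq_neg.mp h

theorem dotProduct_smul_sub_eq_neg_of_transpose_eq_neg [NoZeroDivisors R] [CharZero R]
    {A : Matrix n n R} (hA : Aᵀ = -A) (s l c : R) (v : n → R) :
    v ⬝ᵥ (s • (l • A *ᵥ v - c • v)) = -(s * c * (v ⬝ᵥ v)) := by
  simp only [dotProduct_smul, dotProduct_sub, smul_eq_mul,
    dotProduct_mulVec_self_eq_zero_of_transpose_eq_neg hA v]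
  ring

theorem dotProduct_self_nonneg [LinearOrder R] [IsStrictOrderedRing R] (v : n → R) :
    0 ≤ v ⬝ᵥ v :=
  Finset.sum_nonneg fun i _ => mul_self_nonneg (v i)

end SkewQuadraticForm

theorem Srot_transpose : Srotᵀ = -Srot := by
  ext i j
  fin_cases i <;> fin_cases j <;> simp [Srot]

theorem add_one_sub_cos_pos {c : ℝ} (hc : 0 < c) (α : ℝ) : 0 < c + 1 - cos α := by
  linarith [cos_le_one α]

/-- The counterexample coefficients of Lemma 1: `c_L(α) = sin α`,
`c_D(α) = c₀ + 1 − cos α` with `c₀ > 0` give positive drag, a passive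
aerodynamic force, and zero lift at `α = 0, π`. -/
theorem passivity_counterexample_coefficients (c₀ : ℝ) (hc₀ : 0 < c₀)
    (kₐ : ℝ) (hk : 0 < kₐ) :
    let cL : ℝ → ℝ := fun α => sin α
    let cD : ℝ → ℝ := fun α => c₀ + 1 - cos α
    (∀ α, 0 < cD α) ∧
    (∀ (vₐ : Fin 2 → ℝ) (α : ℝ),
      vₐ ⬝ᵥ ((kₐ * Real.sqrt (vₐ ⬝ᵥ vₐ)) •
        (cL α • Srot.mulVec vₐ - cD α • vₐ)) ≤ 0) ∧
    cL 0 = 0 ∧ cL π = 0 := by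
  refine ⟨add_one_sub_cos_pos hc₀, fun v α => ?_, sin_zero, sin_pi⟩
  rw [dotProduct_smul_sub_eq_neg_of_transpose_eq_neg Srot_transpose, neg_nonpos]
  exact mul_nonneg (mul_nonneg (by positivity) (add_one_sub_cos_pos hc₀ α).le)
    (dotProduct_self_nonneg v)
end

section
/- Let f_p(α, v) = k_a|v|(c̄_L(α) S + c̄_D(α) I) v be the transformed aerodynamic force expressed in body coordinates with v = v_a written via v₁ = −|v| cos(α+δ), v₂ = |v| sin(α+δ), and with c̄_L(α) = c_L(α) − λ(α) sin(α+δ), c̄_D(α) = c_D(α) + λ(α) cos(α+δ), λ = c_L' cos(α+δ) + c_D' sin(α+δ). Then e₂ᵀ ∂_α f_p ≡ 0: the second body-frame component of the partial derivative of f_p with respect to α is identically zero. -/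
open Real Matrix

/-!
Write `θ = α + δ`, so that the body-frame air velocity is `v = r (-cos θ, sin θ)`. Since
`S v = r (-sin θ, -cos θ)`, the second component of `(c̄_L' S - c̄_D' I) v` is
`-r (c̄_L' cos θ + c̄_D' sin θ)`. Differentiating `c̄_L = c_L - λ sin θ` and
`c̄_D = c_D + λ cos θ`, the `λ'` terms cancel and `cos² θ + sin² θ = 1` gives
`c̄_L' cos θ + c̄_D' sin θ = c_L' cos θ + c_D' sin θ - λ`, which vanishes by the definition of `λ`.
-/

theorem Srot_mulVec_apply_one (v : Fin 2 → ℝ) : (Srot *ᵥ v) 1 = v 0 := by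
  simp [Srot, mulVec, dotProduct, Fin.sum_univ_two]

theorem second_component_smul_Srot_mulVec_sub_smul (k c d : ℝ) (v : Fin 2 → ℝ) :
    (![0, 1] : Fin 2 → ℝ) ⬝ᵥ (k • (c • Srot *ᵥ v - d • v)) = k * (c * v 0 - d * v 1) := by
  simp only [dotProduct, Fin.sum_univ_two, Pi.smul_apply, Pi.sub_apply, smul_eq_mul,
    Srot_mulVec_apply_one, Matrix.cons_val_zero, Matrix.cons_val_one]
  ring

section SphericalEquivalency

variable {cL cD lam : ℝ → ℝ} {δ α cL' cD' lam' : ℝ}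

theorem hasDerivAt_sub_mul_sin_add (hL : HasDerivAt cL cL' α) (hlam : HasDerivAt lam lam' α) :
    HasDerivAt (fun β => cL β - lam β * sin (β + δ))
      (cL' - (lam' * sin (α + δ) + lam α * cos (α + δ))) α :=
  hL.sub (hlam.mul ((hasDerivAt_id' α).add_const δ).sin |>.congr_deriv (by simp))

theorem hasDerivAt_add_mul_cos_add (hD : HasDerivAt cD cD' α) (hlam : HasDerivAt lam lam' α) :
    HasDerivAt (fun β => cD β + lam β * cos (β + δ))
      (cD' + (lam' * cos (α + δ) - lam α * sin (α + δ))) α :=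
  hD.add (hlam.mul ((hasDerivAt_id' α).add_const δ).cos |>.congr_deriv (by simp; ring))

theorem deriv_sub_mul_sin_mul_cos_add_deriv_add_mul_cos_mul_sin
    (hL : HasDerivAt cL cL' α) (hD : HasDerivAt cD cD' α) (hlam : HasDerivAt lam lam' α)
    (hlamα : lam α = cL' * cos (α + δ) + cD' * sin (α + δ)) :
    deriv (fun β => cL β - lam β * sin (β + δ)) α * cos (α + δ)
      + deriv (fun β => cD β + lam β * cos (β + δ)) α * sin (α + δ) = 0 := by
  rw [(hasDerivAt_sub_mul_sin_add hL hlam).deriv, (hasDerivAt_add_mul_cos_add hD hlam).deriv,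
    hlamα]
  linear_combination (-(cL' * cos (α + δ) + cD' * sin (α + δ))) * sin_sq_add_cos_sq (α + δ)

end SphericalEquivalency

theorem second_component_partial_fp_zero_general
    (cL cD : ℝ → ℝ) (hcL : ContDiff ℝ 2 cL) (hcD : ContDiff ℝ 2 cD)
    (δ kₐ r : ℝ) :
    let lam : ℝ → ℝ := fun α =>
      deriv cL α * cos (α + δ) + deriv cD α * sin (α + δ)
    let cLbar : ℝ → ℝ := fun α => cL α - lam α * sin (α + δ)
    let cDbar : ℝ → ℝ := fun α => cD α + lam α * cos (α + δ)
    let v : ℝ → Fin 2 → ℝ := fun α => ![-(r * cos (α + δ)), r * sin (α + δ)]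
    ∀ α, (![0, 1] : Fin 2 → ℝ) ⬝ᵥ
      ((kₐ * r) • (deriv cLbar α • Srot.mulVec (v α)
        - deriv cDbar α • v α)) = 0 := by
  intro lam cLbar cDbar v α
  have hdL := hcL.differentiable_deriv_two
  have hdD := hcD.differentiable_deriv_two
  have hlam : HasDerivAt lam (deriv lam α) α :=
    ((hdL.mul (differentiable_id.add_const δ).cos).add
      (hdD.mul (differentiable_id.add_const δ).sin) α).hasDerivAt
  have key : deriv cLbar α * cos (α + δ) + deriv cDbar α * sin (α + δ) = 0 :=
    deriv_sub_mul_sin_mul_cos_add_deriv_add_mul_cos_mul_sin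
      (hcL.differentiable two_ne_zero α).hasDerivAt
      (hcD.differentiable two_ne_zero α).hasDerivAt hlam rfl
  rw [second_component_smul_Srot_mulVec_sub_smul]
  simp only [v, Matrix.cons_val_zero, Matrix.cons_val_one]
  linear_combination (-(kₐ * r * r)) * key

/-- Computational core of Theorem 3 i) (Eq. (propfpB2)): the second body-frame
component of `∂_α f_p` vanishes identically, where
`∂_α f_p = k_a |v| (c̄_L' S − c̄_D' I) v`, the body-frame air velocity is
`v = (−r cos(α+δ), r sin(α+δ))`, and `c̄_L, c̄_D, λ` are as in the spherical
equivalency. -/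
theorem second_component_partial_fp_zero
    (cL cD : ℝ → ℝ) (hcL : ContDiff ℝ 2 cL) (hcD : ContDiff ℝ 2 cD)
    (δ kₐ r : ℝ) (hk : 0 < kₐ) (hr : 0 ≤ r) :
    let lam : ℝ → ℝ := fun α =>
      deriv cL α * cos (α + δ) + deriv cD α * sin (α + δ)
    let cLbar : ℝ → ℝ := fun α => cL α - lam α * sin (α + δ)
    let cDbar : ℝ → ℝ := fun α => cD α + lam α * cos (α + δ)
    let v : ℝ → Fin 2 → ℝ := fun α => ![-(r * cos (α + δ)), r * sin (α + δ)]
    ∀ α, (![0, 1] : Fin 2 → ℝ) ⬝ᵥ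
      ((kₐ * r) • (deriv cLbar α • Srot.mulVec (v α)
        - deriv cDbar α • v α)) = 0 :=
  second_component_partial_fp_zero_general cL cD hcL hcD δ kₐ r
end

section
/- Let F_p : R → R² be a C¹ function of θ with |F_p(θ₀)| > 0 and suppose e₂ᵀ R(θ₀)ᵀ F_p(θ₀) = 0 (equilibrium condition) and e₂ᵀ R(θ)ᵀ ∂_θF_p(θ) ≡ 0. Then the derivative of the unit vector F_p/|F_p| with respect to θ vanishes at θ₀, i.e., ∂_θ [F_p/|F_p|](θ₀) = 0. Moreover, the derivative ∂_θ [e₂ᵀ R(θ)ᵀ F_p(θ)] evaluated at θ₀ equals −e₁ᵀR(θ₀)ᵀF_p(θ₀) = ±|F_p(θ₀)| ≠ 0, so by the implicit function theorem the equilibrium θ₀ is isolated. -/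
/-! The direction `F/|F|` is stationary exactly when `F'` is parallel to `F`. Both `R(θ₀)ᵀF`
and `R(θ₀)ᵀF'` lie on the first axis, so they are parallel, and rotations preserve parallelism.
The equilibrium function `g(θ) = e₂ᵀR(θ)ᵀF(θ)` has derivative `-e₁ᵀR(θ)ᵀF(θ)`, whose square at
`θ₀` is `|F(θ₀)|²` since rotations are isometries; a zero with non-vanishing derivative is
isolated. -/

open Real Matrix

/-- Rotation matrix by angle `θ`. -/
noncomputable def Rot (θ : ℝ) : Matrix (Fin 2) (Fin 2) ℝ :=
  !![cos θ, -sin θ; sin θ, cos θ]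

section DotProduct

variable {ι : Type*} [Fintype ι] {F : ℝ → ι → ℝ} {w : ι → ℝ} {t : ℝ}

theorem HasDerivAt.dotProduct_self (hF : HasDerivAt F w t) :
    HasDerivAt (fun s => F s ⬝ᵥ F s) (2 * (F t ⬝ᵥ w)) t := by
  have hcomp := hasDerivAt_pi.mp hF
  refine (HasDerivAt.fun_sum (u := Finset.univ) fun i _ => (hcomp i).mul (hcomp i)).congr_deriv ?_
  simp only [dotProduct, Finset.mul_sum]
  exact Finset.sum_congr rfl fun i _ => by ring

theorem HasDerivAt.inv_sqrt_dotProduct_self_smul_of_smul_eq_smul (hF : HasDerivAt F w t)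
    (hpos : 0 < F t ⬝ᵥ F t) (hpar : (F t ⬝ᵥ F t) • w = (F t ⬝ᵥ w) • F t) :
    HasDerivAt (fun s => (√(F s ⬝ᵥ F s))⁻¹ • F s) 0 t := by
  have hsqrt_ne : √(F t ⬝ᵥ F t) ≠ 0 := (sqrt_pos.mpr hpos).ne'
  refine (((hF.dotProduct_self.sqrt hpos.ne').inv hsqrt_ne).smul hF).congr_deriv ?_
  ext i
  have hpar_i := congrFun hpar i
  have hsqrt := sq_sqrt hpos.le
  simp only [Pi.smul_apply, smul_eq_mul, Pi.add_apply, Pi.zero_apply, Pi.inv_apply] at hpar_i ⊢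
  field_simp
  linear_combination hpar_i + w i * hsqrt

end DotProduct

theorem HasDerivAt.exists_pos_forall_ne_zero {f : ℝ → ℝ} {f' x : ℝ} (hf : HasDerivAt f f' x)
    (hf' : f' ≠ 0) (hfx : f x = 0) :
    ∃ ε > (0 : ℝ), ∀ y, y ≠ x → |y - x| < ε → f y ≠ 0 := by
  obtain ⟨ε, hε, hball⟩ := Metric.eventually_nhds_iff.mp
    (eventually_nhdsWithin_iff.mp (hf.eventually_ne hf'))
  refine ⟨ε, hε, fun y hne hlt => ?_⟩
  rw [← hfx]
  exact hball (by rwa [Real.dist_eq]) hne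

section Rot

theorem rot_transpose_mulVec_fst (θ : ℝ) (v : Fin 2 → ℝ) :
    (![1, 0] : Fin 2 → ℝ) ⬝ᵥ (Rot θ)ᵀ *ᵥ v = cos θ * v 0 + sin θ * v 1 := by
  simp [Rot, mulVec, dotProduct, Fin.sum_univ_two]

theorem rot_transpose_mulVec_snd (θ : ℝ) (v : Fin 2 → ℝ) :
    (![0, 1] : Fin 2 → ℝ) ⬝ᵥ (Rot θ)ᵀ *ᵥ v = -sin θ * v 0 + cos θ * v 1 := by
  simp [Rot, mulVec, dotProduct, Fin.sum_univ_two]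

theorem rot_transpose_mulVec_fst_eq_or_eq_neg_of_snd_eq_zero {θ : ℝ} {v : Fin 2 → ℝ}
    (hv : (![0, 1] : Fin 2 → ℝ) ⬝ᵥ (Rot θ)ᵀ *ᵥ v = 0) :
    (![1, 0] : Fin 2 → ℝ) ⬝ᵥ (Rot θ)ᵀ *ᵥ v = √(v ⬝ᵥ v) ∨
      (![1, 0] : Fin 2 → ℝ) ⬝ᵥ (Rot θ)ᵀ *ᵥ v = -√(v ⬝ᵥ v) := by
  rw [rot_transpose_mulVec_snd] at hv
  rw [← sq_eq_sq_iff_eq_or_eq_neg, sq_sqrt (by simpa using dotProduct_self_star_nonneg v),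
    rot_transpose_mulVec_fst]
  simp only [dotProduct, Fin.sum_univ_two]
  linear_combination (-(-sin θ * v 0 + cos θ * v 1)) * hv
    + (v 0 * v 0 + v 1 * v 1) * sin_sq_add_cos_sq θ

theorem smul_eq_smul_of_rot_transpose_mulVec_snd_eq_zero {θ : ℝ} {v w : Fin 2 → ℝ}
    (hv : (![0, 1] : Fin 2 → ℝ) ⬝ᵥ (Rot θ)ᵀ *ᵥ v = 0)
    (hw : (![0, 1] : Fin 2 → ℝ) ⬝ᵥ (Rot θ)ᵀ *ᵥ w = 0) :
    (v ⬝ᵥ v) • w = (v ⬝ᵥ w) • v := by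
  rw [rot_transpose_mulVec_snd] at hv hw
  have hcross : v 0 * w 1 - v 1 * w 0 = 0 := by
    linear_combination (-(sin θ * w 1 + cos θ * w 0)) * hv + (sin θ * v 1 + cos θ * v 0) * hw
      - (v 0 * w 1 - v 1 * w 0) * sin_sq_add_cos_sq θ
  ext i
  fin_cases i <;>
    simp only [dotProduct, Fin.sum_univ_two, Fin.isValue, Fin.zero_eta, Fin.mk_one, Pi.smul_apply,
      smul_eq_mul]
  · linear_combination (-v 1) * hcross
  · linear_combination v 0 * hcross

theorem HasDerivAt.rot_transpose_mulVec_snd {F : ℝ → Fin 2 → ℝ} {w : Fin 2 → ℝ} {θ : ℝ}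
    (hF : HasDerivAt F w θ) :
    HasDerivAt (fun t => (![0, 1] : Fin 2 → ℝ) ⬝ᵥ (Rot t)ᵀ *ᵥ F t)
      (-((![1, 0] : Fin 2 → ℝ) ⬝ᵥ (Rot θ)ᵀ *ᵥ F θ) + (![0, 1] : Fin 2 → ℝ) ⬝ᵥ (Rot θ)ᵀ *ᵥ w) θ := by
  have hcomp := hasDerivAt_pi.mp hF
  simp only [rot_transpose_mulVec_fst, _root_.rot_transpose_mulVec_snd]
  refine (((hasDerivAt_sin θ).neg.mul (hcomp 0)).add
    ((hasDerivAt_cos θ).mul (hcomp 1))).congr_deriv ?_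
  simp only [Pi.neg_apply]
  ring

end Rot

/-- Theorem 3 i)-ii): if `|F_p(θ₀)| > 0`, the equilibrium condition
`e₂ᵀR(θ₀)ᵀF_p(θ₀) = 0` holds, and `e₂ᵀR(θ)ᵀ∂_θF_p(θ) ≡ 0`, then the direction
`F_p/|F_p|` has zero derivative at `θ₀`, the derivative of the equilibrium
function at `θ₀` equals `−e₁ᵀR(θ₀)ᵀF_p(θ₀) = ±|F_p(θ₀)| ≠ 0`, and the
equilibrium `θ₀` is isolated. -/
theorem direction_locally_constant_and_isolated
    (Fp : ℝ → Fin 2 → ℝ) (hFp : ContDiff ℝ 1 Fp) (θ₀ : ℝ)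
    (hnz : 0 < Real.sqrt (Fp θ₀ ⬝ᵥ Fp θ₀))
    (heq : (![0, 1] : Fin 2 → ℝ) ⬝ᵥ (Rot θ₀)ᵀ.mulVec (Fp θ₀) = 0)
    (hker : ∀ θ, (![0, 1] : Fin 2 → ℝ) ⬝ᵥ (Rot θ)ᵀ.mulVec (deriv Fp θ) = 0) :
    deriv (fun θ => (Real.sqrt (Fp θ ⬝ᵥ Fp θ))⁻¹ • Fp θ) θ₀ = 0 ∧
    deriv (fun θ => (![0, 1] : Fin 2 → ℝ) ⬝ᵥ (Rot θ)ᵀ.mulVec (Fp θ)) θ₀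
      = - ((![1, 0] : Fin 2 → ℝ) ⬝ᵥ (Rot θ₀)ᵀ.mulVec (Fp θ₀)) ∧
    ((![1, 0] : Fin 2 → ℝ) ⬝ᵥ (Rot θ₀)ᵀ.mulVec (Fp θ₀)
        = Real.sqrt (Fp θ₀ ⬝ᵥ Fp θ₀) ∨
      (![1, 0] : Fin 2 → ℝ) ⬝ᵥ (Rot θ₀)ᵀ.mulVec (Fp θ₀)
        = - Real.sqrt (Fp θ₀ ⬝ᵥ Fp θ₀)) ∧
    (![1, 0] : Fin 2 → ℝ) ⬝ᵥ (Rot θ₀)ᵀ.mulVec (Fp θ₀) ≠ 0 ∧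
    ∃ ε > (0 : ℝ), ∀ θ, θ ≠ θ₀ → |θ - θ₀| < ε →
      (![0, 1] : Fin 2 → ℝ) ⬝ᵥ (Rot θ)ᵀ.mulVec (Fp θ) ≠ 0 := by
  have hF : HasDerivAt Fp (deriv Fp θ₀) θ₀ :=
    ((hFp.differentiable one_ne_zero) θ₀).hasDerivAt
  have hg := hF.rot_transpose_mulVec_snd
  rw [hker θ₀, add_zero] at hg
  have hfst := rot_transpose_mulVec_fst_eq_or_eq_neg_of_snd_eq_zero heq
  have hfst_ne : (![1, 0] : Fin 2 → ℝ) ⬝ᵥ (Rot θ₀)ᵀ *ᵥ Fp θ₀ ≠ 0 := by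
    rcases hfst with h | h <;> rw [h] <;> linarith
  have hdir := hF.inv_sqrt_dotProduct_self_smul_of_smul_eq_smul (sqrt_pos.mp hnz)
    (smul_eq_smul_of_rot_transpose_mulVec_snd_eq_zero heq (hker θ₀))
  exact ⟨hdir.deriv, hg.deriv, hfst, hfst_ne,
    hg.exists_pos_forall_ne_zero (neg_ne_zero.mpr hfst_ne) heq⟩
end
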